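/- Let U and V be finite abelian groups with exp(U) = exp(V). Then Hom(U, V) is isomorphic to U if and only if V is cyclic. -/

import Mathlib

/-!
If `V` is cyclic of order `n = exp U`, then `V` has enough `n`-th roots of unity, so duality for
finite abelian groups gives `Hom(U, V) ≅ U`.

Conversely, pick `g ∈ V` of order `n = exp V` and let `C = ⟨g⟩`. By the first part
`Hom(U, C) ≅ U ≅ Hom(U, V)`, so by counting every homomorphism `U → V` takes values in `C`.
Since `Hom(U, C) ≅ U` has an element of order `n`, there is a surjection `χ : U → C`; composing
it with the homomorphism `C → V` sending `g` to an arbitrary `v` shows `v ∈ C`, so `V = C`.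
-/

open Function

lemma IsCyclic.hasEnoughRootsOfUnity_natCard (W : Type*) [CommGroup W] [Finite W] [IsCyclic W] :
    HasEnoughRootsOfUnity W (Nat.card W) where
  prim := by
    obtain ⟨g, hg⟩ := IsCyclic.exists_generator (α := W)
    exact ⟨g, orderOf_eq_card_of_forall_mem_zpowers hg ▸ IsPrimitiveRoot.orderOf g⟩
  cyc :=
    have : IsCyclic Wˣ := isCyclic_of_surjective toUnits toUnits.surjective
    Subgroup.isCyclic _

lemma MonoidHom.orderOf_eq_exponent_range {U V : Type*} [Group U] [CommGroup V]
    (χ : U →* V) : orderOf χ = Monoid.exponent χ.range := by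
  refine Nat.dvd_antisymm (orderOf_dvd_of_pow_eq_one ?_) ?_
  · ext u
    exact congrArg Subtype.val (Monoid.pow_exponent_eq_one (⟨χ u, u, rfl⟩ : χ.range))
  · refine Monoid.exponent_dvd_of_forall_pow_eq_one fun ⟨_, u, hu⟩ ↦ ?_
    ext
    simp [← hu, ← MonoidHom.pow_apply, pow_orderOf_eq_one]

lemma MonoidHom.range_le_range_of_natCard_le {U W V : Type*} [Group U] [Group W] [Group V]
    [Finite (U →* V)] {ι : W →* V} (hι : Injective ι)
    (hcard : Nat.card (U →* V) ≤ Nat.card (U →* W)) (f : U →* V) : f.range ≤ ι.range := by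
  have hinj : Injective (ι.comp : (U →* W) → (U →* V)) :=
    fun φ ψ h ↦ MonoidHom.ext fun u ↦ hι (DFunLike.congr_fun h u)
  obtain ⟨φ, rfl⟩ := (hinj.bijective_of_nat_card_le hcard).2 f
  rw [MonoidHom.range_comp]
  exact Subgroup.map_le_range ι _

section Duality

variable {U W : Type*} [CommGroup U] [Finite U] [CommGroup W] [Finite W] [IsCyclic W]

lemma monoidHom_mulEquiv_self_of_exponent_dvd_natCard
    (h : Monoid.exponent U ∣ Nat.card W) : Nonempty ((U →* W) ≃* U) := by
  have := IsCyclic.hasEnoughRootsOfUnity_natCard W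
  have := HasEnoughRootsOfUnity.of_dvd W h
  obtain ⟨e⟩ := CommGroup.monoidHom_mulEquiv_of_hasEnoughRootsOfUnity U W
  exact ⟨toUnits.monoidHomCongrRight.trans e⟩

lemma exists_surjective_of_natCard_eq_exponent (h : Nat.card W = Monoid.exponent U) :
    ∃ χ : U →* W, Surjective χ := by
  obtain ⟨e⟩ := monoidHom_mulEquiv_self_of_exponent_dvd_natCard (U := U) h.symm.dvd
  have : Finite (U →* W) := .of_equiv U e.symm.toEquiv
  obtain ⟨χ, hχ⟩ := Monoid.exists_orderOf_eq_exponent (Monoid.ExponentExists.of_finite (G := U →* W))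
  rw [Monoid.exponent_eq_of_mulEquiv e, χ.orderOf_eq_exponent_range, ← h] at hχ
  refine ⟨χ, MonoidHom.range_eq_top.mp (Subgroup.eq_top_of_card_eq _ ?_)⟩
  exact Nat.dvd_antisymm (Subgroup.card_subgroup_dvd_card _) (hχ ▸ Group.exponent_dvd_nat_card)

end Duality

lemma isCyclic_of_monoidHom_mulEquiv_self {U V : Type*} [CommGroup U] [CommGroup V] [Finite U]
    [Finite V] (hexp : Monoid.exponent U = Monoid.exponent V) (e : (U →* V) ≃* U) :
    IsCyclic V := by
  obtain ⟨g, hg⟩ := Monoid.exists_orderOf_eq_exponent (Monoid.ExponentExists.of_finite (G := V))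
  set C := Subgroup.zpowers g
  have hgen : ∀ c : C, c ∈ Subgroup.zpowers ⟨g, Subgroup.mem_zpowers g⟩ := by
    rintro ⟨c, k, rfl⟩
    exact ⟨k, rfl⟩
  have : IsCyclic C := ⟨_, hgen⟩
  have hC : Nat.card C = Monoid.exponent U := by rw [Nat.card_zpowers, hg, hexp]
  obtain ⟨χ, hχ⟩ := exists_surjective_of_natCard_eq_exponent (U := U) hC
  obtain ⟨eC⟩ := monoidHom_mulEquiv_self_of_exponent_dvd_natCard (U := U) hC.symm.dvd
  have : Finite (U →* V) := .of_equiv U e.symm.toEquiv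
  have hrange (f : U →* V) : f.range ≤ C := by
    simpa using f.range_le_range_of_natCard_le Subtype.val_injective (ι := C.subtype)
      (Nat.card_congr (e.trans eC.symm).toEquiv).le
  refine ⟨g, fun v ↦ ?_⟩
  have hv : orderOf v ∣ orderOf (⟨g, Subgroup.mem_zpowers g⟩ : C) := by
    rw [Subgroup.orderOf_mk, hg]
    exact Monoid.order_dvd_exponent v
  obtain ⟨u, hu⟩ := hχ ⟨g, Subgroup.mem_zpowers g⟩
  exact hrange ((monoidHomOfForallMemZpowers hgen hv).comp χ) ⟨u, by simp [hu]⟩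

theorem hom_iso_self_iff_isCyclic (U V : Type*) [CommGroup U] [CommGroup V]
    [Finite U] [Finite V] (hexp : Monoid.exponent U = Monoid.exponent V) :
    Nonempty ((U →* V) ≃* U) ↔ IsCyclic V :=
  ⟨fun ⟨e⟩ ↦ isCyclic_of_monoidHom_mulEquiv_self hexp e, fun _ ↦
    monoidHom_mulEquiv_self_of_exponent_dvd_natCard (hexp.trans IsCyclic.exponent_eq_card).dvd⟩
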